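/- arXiv:2005.13563 — 2 statements merged into one kernel-verified Lean document; each statement's English description precedes it below -/
import Mathlib

section
/- Let {xᵢ}ᵢ₌₀^{n+1} and {yⱼ}ⱼ₌₀^{n+1} be distinct nodes with associated Lagrange basis polynomials ℓᵢ. Given real coefficients φˣ(xᵢ,yⱼ) and φʸ(xᵢ,yⱼ) satisfying φˣ(xᵢ,yⱼ) + φʸ(xᵢ,yⱼ) - φˣ(x₀,yⱼ) - φʸ(xᵢ,y₀) = 0 for all i,j, define Bₓ(x,y) = Σᵢⱼ φˣ(xᵢ,yⱼ) ℓᵢ(x) ℓⱼ'(y) and B_y(x,y) = Σᵢⱼ φʸ(xᵢ,yⱼ) ℓᵢ'(x) ℓⱼ(y). Then ∂ₓBₓ + ∂_yB_y = 0 identically. -/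
open Polynomial

/-! Both partial derivatives produce the same bilinear form `∑ᵢⱼ cᵢⱼ ℓᵢ'(x) ℓⱼ'(y)`, with
`cᵢⱼ = φˣᵢⱼ + φʸᵢⱼ`. The circulation constraint turns `cᵢⱼ` into `φˣ₀ⱼ + φʸᵢ₀`, a sum of a term
independent of `i` and a term independent of `j`, so the form factors through `∑ᵢ ℓᵢ'(x)` or
`∑ⱼ ℓⱼ'(y)`; both vanish because the Lagrange basis sums to the constant `1`. -/

theorem Lagrange.sum_derivative_basis {F ι : Type*} [Field F] [DecidableEq ι] {s : Finset ι}
    {v : ι → F} (hvs : Set.InjOn v s) (hs : s.Nonempty) :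
    ∑ i ∈ s, derivative (Lagrange.basis s v i) = 0 := by
  rw [← map_sum, Lagrange.sum_basis hvs hs, derivative_one]

theorem sum_sum_mul_mul_add_eq_zero_of_circulation {R ι κ : Type*} [CommRing R]
    [Fintype ι] [Fintype κ] (φx φy : ι → κ → R) (i₀ : ι) (j₀ : κ)
    (hcirc : ∀ i j, φx i j + φy i j - φx i₀ j - φy i j₀ = 0)
    {a : ι → R} {b : κ → R} (ha : ∑ i, a i = 0) (hb : ∑ j, b j = 0) :
    ∑ i, ∑ j, φx i j * a i * b j + ∑ i, ∑ j, φy i j * a i * b j = 0 := by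
  calc ∑ i, ∑ j, φx i j * a i * b j + ∑ i, ∑ j, φy i j * a i * b j
      = ∑ i, ∑ j, (a i * (φx i₀ j * b j) + φy i j₀ * a i * b j) := by
        rw [← Finset.sum_add_distrib]
        refine Finset.sum_congr rfl fun i _ => ?_
        rw [← Finset.sum_add_distrib]
        exact Finset.sum_congr rfl fun j _ => by linear_combination a i * b j * hcirc i j
    _ = (∑ i, a i) * ∑ j, φx i₀ j * b j + ∑ i, φy i j₀ * a i * ∑ j, b j := by
        simp only [Finset.sum_add_distrib, ← Finset.mul_sum, Finset.sum_mul]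
    _ = 0 := by rw [ha, hb]; simp

theorem sd_pointwise_div_free_general (n : ℕ) (xs ys : Fin (n + 2) → ℝ)
    (hx : Function.Injective xs) (hy : Function.Injective ys)
    (φx φy : Fin (n + 2) → Fin (n + 2) → ℝ)
    (hcirc : ∀ i j, φx i j + φy i j - φx 0 j - φy i 0 = 0) :
    let ℓx := fun i => Lagrange.basis Finset.univ xs i
    let ℓy := fun j => Lagrange.basis Finset.univ ys j
    let Bx : ℝ → ℝ → ℝ := fun x y =>
      ∑ i : Fin (n + 2), ∑ j : Fin (n + 2),
        φx i j * (ℓx i).eval x * (Polynomial.derivative (ℓy j)).eval y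
    let By : ℝ → ℝ → ℝ := fun x y =>
      ∑ i : Fin (n + 2), ∑ j : Fin (n + 2),
        φy i j * (Polynomial.derivative (ℓx i)).eval x * (ℓy j).eval y
    ∀ x y : ℝ, deriv (fun s => Bx s y) x + deriv (fun s => By x s) y = 0 := by
  intro ℓx ℓy Bx By x y
  have hBx : HasDerivAt (fun s => Bx s y)
      (∑ i, ∑ j, φx i j * (derivative (ℓx i)).eval x * (derivative (ℓy j)).eval y) x :=
    HasDerivAt.fun_sum fun i _ => HasDerivAt.fun_sum fun j _ =>
      (((ℓx i).hasDerivAt x).const_mul _).mul_const _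
  have hBy : HasDerivAt (fun s => By x s)
      (∑ i, ∑ j, φy i j * (derivative (ℓx i)).eval x * (derivative (ℓy j)).eval y) y :=
    HasDerivAt.fun_sum fun i _ => HasDerivAt.fun_sum fun j _ =>
      ((ℓy j).hasDerivAt y).const_mul _
  have hℓx : ∑ i, (derivative (ℓx i)).eval x = 0 := by
    rw [← eval_finsetSum, Lagrange.sum_derivative_basis hx.injOn Finset.univ_nonempty,
      eval_zero]
  have hℓy : ∑ j, (derivative (ℓy j)).eval y = 0 := by
    rw [← eval_finsetSum, Lagrange.sum_derivative_basis hy.injOn Finset.univ_nonempty,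
      eval_zero]
  rw [hBx.deriv, hBy.deriv]
  exact sum_sum_mul_mul_add_eq_zero_of_circulation φx φy 0 0 hcirc hℓx hℓy

/-- Given distinct nodes `xs`, `ys` (with `xs 0 = ys 0 = 0`) and flux coefficients
satisfying the discrete circulation constraint, the spectral-difference magnetic field
`Bₓ(x,y) = Σᵢⱼ φˣᵢⱼ ℓᵢ(x) ℓⱼ'(y)`, `B_y(x,y) = Σᵢⱼ φʸᵢⱼ ℓᵢ'(x) ℓⱼ(y)` is pointwise
divergence free: `∂ₓBₓ + ∂_yB_y = 0` everywhere. -/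
theorem sd_pointwise_div_free (n : ℕ) (xs ys : Fin (n + 2) → ℝ)
    (hx : Function.Injective xs) (hy : Function.Injective ys)
    (hx0 : xs 0 = 0) (hy0 : ys 0 = 0)
    (φx φy : Fin (n + 2) → Fin (n + 2) → ℝ)
    (hcirc : ∀ i j, φx i j + φy i j - φx 0 j - φy i 0 = 0) :
    let ℓx := fun i => Lagrange.basis Finset.univ xs i
    let ℓy := fun j => Lagrange.basis Finset.univ ys j
    let Bx : ℝ → ℝ → ℝ := fun x y =>
      ∑ i : Fin (n + 2), ∑ j : Fin (n + 2),
        φx i j * (ℓx i).eval x * (Polynomial.derivative (ℓy j)).eval y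
    let By : ℝ → ℝ → ℝ := fun x y =>
      ∑ i : Fin (n + 2), ∑ j : Fin (n + 2),
        φy i j * (Polynomial.derivative (ℓx i)).eval x * (ℓy j).eval y
    ∀ x y : ℝ, deriv (fun s => Bx s y) x + deriv (fun s => By x s) y = 0 :=
  sd_pointwise_div_free_general n xs ys hx hy φx φy hcirc
end

section
/- In the 3D tensor-product spectral-difference representation Bₓ(x,y,z) = Σᵢⱼₖ φᵢⱼₖ ℓᵢ(x) ℓⱼ'(y) ℓₖ'(z) with analogous B_y, B_z built from fluxes satisfying the 3D discrete flux-balance constraint Σ over faces of each control volume equals zero, one has ∂ₓBₓ + ∂_yB_y + ∂_zB_z = 0 identically, using Σᵢ ℓᵢ'(·) = 0. -/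
open Polynomial

/-!
Differentiating each component turns its single `ℓ` factor into `ℓ'`, so the divergence is one
trilinear form in the vectors `(ℓᵢ'(x))`, `(ℓⱼ'(y))`, `(ℓₖ'(z))` with coefficients
`φx + φy + φz`. By the flux balance these coefficients equal
`φx 0 j k + φy i 0 k + φz i j 0`, each term missing one index, and summing over the missing
index kills it because `Σᵢ ℓᵢ' = 0`.
-/

theorem Lagrange.sum_derivative_basis_eval {F ι : Type*} [Field F] [DecidableEq ι]
    {s : Finset ι} {v : ι → F} (hvs : Set.InjOn v s) (hs : s.Nonempty) (t : F) :
    ∑ i ∈ s, (derivative (Lagrange.basis s v i)).eval t = 0 := by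
  rw [← eval_finsetSum, ← map_sum, Lagrange.sum_basis hvs hs, derivative_one, eval_zero]

theorem HasDerivAt.sum_sum_sum {ι : Type*} {s : Finset ι} {f : ι → ι → ι → ℝ → ℝ}
    {f' : ι → ι → ι → ℝ} {x : ℝ} (h : ∀ i j k, HasDerivAt (f i j k) (f' i j k) x) :
    HasDerivAt (fun t => ∑ i ∈ s, ∑ j ∈ s, ∑ k ∈ s, f i j k t)
      (∑ i ∈ s, ∑ j ∈ s, ∑ k ∈ s, f' i j k) x :=
  .fun_sum fun i _ => .fun_sum fun j _ => .fun_sum fun k _ => h i j k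

theorem Finset.sum_sum_sum_mul_mul_mul_eq_zero {R ι : Type*} [CommRing R] [Fintype ι]
    (u v w : ι → ι → R) {a b c : ι → R}
    (ha : ∑ i, a i = 0) (hb : ∑ j, b j = 0) (hc : ∑ k, c k = 0) :
    ∑ i, ∑ j, ∑ k, (u j k + v i k + w i j) * a i * b j * c k = 0 := by
  have hu : ∑ i, ∑ j, ∑ k, u j k * a i * b j * c k = 0 := by
    simp_rw [mul_comm (u _ _) (a _), mul_assoc (a _), ← Finset.mul_sum, ← Finset.sum_mul, ha,
      zero_mul]
  have hv : ∑ i, ∑ j, ∑ k, v i k * a i * b j * c k = 0 := by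
    simp_rw [mul_right_comm _ (b _) (c _), ← Finset.sum_mul, ← Finset.mul_sum, hb, mul_zero,
      Finset.sum_const_zero]
  have hw : ∑ i, ∑ j, ∑ k, w i j * a i * b j * c k = 0 := by
    simp_rw [← Finset.mul_sum, hc, mul_zero, Finset.sum_const_zero]
  simp only [add_mul, Finset.sum_add_distrib, hu, hv, hw, add_zero]

/-- 3D spectral-difference representation: with
`Bₓ(x,y,z) = Σᵢⱼₖ φˣᵢⱼₖ ℓᵢ(x) ℓⱼ'(y) ℓₖ'(z)` and the analogous `B_y`, `B_z`, built from
fluxes satisfying the 3D discrete flux-balance constraint (the six face fluxes of each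
box `[0,xᵢ]×[0,yⱼ]×[0,zₖ]` sum to zero), one has `∂ₓBₓ + ∂_yB_y + ∂_zB_z = 0`
identically. -/
theorem sd3d_pointwise_div_free (n : ℕ) (nodes : Fin (n + 2) → ℝ)
    (hnodes : Function.Injective nodes)
    (φx φy φz : Fin (n + 2) → Fin (n + 2) → Fin (n + 2) → ℝ)
    (hbalance : ∀ i j k,
      (φx i j k - φx 0 j k) + (φy i j k - φy i 0 k) + (φz i j k - φz i j 0) = 0) :
    let ℓ := fun i => Lagrange.basis Finset.univ nodes i
    let dℓ := fun i => Polynomial.derivative (ℓ i)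
    let Bx : ℝ → ℝ → ℝ → ℝ := fun x y z =>
      ∑ i : Fin (n + 2), ∑ j : Fin (n + 2), ∑ k : Fin (n + 2),
        φx i j k * (ℓ i).eval x * (dℓ j).eval y * (dℓ k).eval z
    let By : ℝ → ℝ → ℝ → ℝ := fun x y z =>
      ∑ i : Fin (n + 2), ∑ j : Fin (n + 2), ∑ k : Fin (n + 2),
        φy i j k * (dℓ i).eval x * (ℓ j).eval y * (dℓ k).eval z
    let Bz : ℝ → ℝ → ℝ → ℝ := fun x y z =>
      ∑ i : Fin (n + 2), ∑ j : Fin (n + 2), ∑ k : Fin (n + 2),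
        φz i j k * (dℓ i).eval x * (dℓ j).eval y * (ℓ k).eval z
    ∀ x y z : ℝ,
      deriv (fun s => Bx s y z) x + deriv (fun s => By x s z) y +
        deriv (fun s => Bz x y s) z = 0 := by
  intro ℓ dℓ Bx By Bz x y z
  have hdℓ (t : ℝ) : ∑ i, (dℓ i).eval t = 0 :=
    Lagrange.sum_derivative_basis_eval hnodes.injOn Finset.univ_nonempty t
  rw [(HasDerivAt.sum_sum_sum fun i j k =>
        ((((ℓ i).hasDerivAt x).const_mul (φx i j k)).mul_const _).mul_const _).deriv,
    (HasDerivAt.sum_sum_sum fun i j k =>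
        (((ℓ j).hasDerivAt y).const_mul (φy i j k * (dℓ i).eval x)).mul_const _).deriv,
    (HasDerivAt.sum_sum_sum fun i j k =>
        ((ℓ k).hasDerivAt z).const_mul (φz i j k * (dℓ i).eval x * (dℓ j).eval y)).deriv]
  calc _ = ∑ i, ∑ j, ∑ k, (φx 0 j k + φy i 0 k + φz i j 0) *
        (dℓ i).eval x * (dℓ j).eval y * (dℓ k).eval z := by
        simp only [← Finset.sum_add_distrib]
        refine Finset.sum_congr rfl fun i _ => Finset.sum_congr rfl fun j _ =>
          Finset.sum_congr rfl fun k _ => ?_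
        linear_combination ((dℓ i).eval x * (dℓ j).eval y * (dℓ k).eval z) * hbalance i j k
    _ = 0 := Finset.sum_sum_sum_mul_mul_mul_eq_zero _ _ _ (hdℓ x) (hdℓ y) (hdℓ z)
end
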